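/- arXiv:1711.06644 — 4 statements merged into one kernel-verified Lean document; each statement's English description precedes it below -/
import Mathlib

section
/- Let X ∈ ℝ^{d×p} with d ≥ p such that the top p×p block X_{(1:p,:)} is nonsingular, and let Y = [I_p; 0] ∈ ℝ^{d×p}. Define 𝒯(X) = X_{(p+1:d,:)} X_{(1:p,:)}^{-1}. Then for both the spectral norm and the Frobenius norm, ‖tan Θ(X, Y)‖ = ‖𝒯(X)‖, where Θ(X,Y) is the diagonal matrix of canonical angles between the column spaces of X and Y. -/
/-!
Write `X = [X₁; X₂]` and `𝒯 = X₂ X₁⁻¹`. Then `XᴴX = X₁ᴴ (1 + 𝒯ᴴ𝒯) X₁` and `XᴴY = X₁ᴴ`, so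
`M = (XᴴX)^{-1/2} XᴴY` satisfies `MᴴM = (1 + 𝒯ᴴ𝒯)⁻¹`. Comparing characteristic polynomials, the
squared cosines `cos² θ_j` are, with multiplicity, the numbers `1 / (1 + σ_k²)` for the singular
values `σ_k` of `𝒯`, and `tan (arccos (1 / √(1 + σ²))) = σ`. So the tangents of the canonical
angles are the singular values of `𝒯`, and both norms agree.
-/

open scoped Matrix

/-- Singular values of a real matrix, given as the square roots of the eigenvalues of `Aᴴ * A`. -/
noncomputable def sVals {m n : Type*} [Fintype m] [Fintype n] [DecidableEq n]
    (A : Matrix m n ℝ) : n → ℝ :=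
  fun j => Real.sqrt ((Matrix.posSemidef_conjTranspose_mul_self A).isHermitian.eigenvalues j)

/-- The square root of a positive semidefinite matrix, as `Matrix.PosSemidef.sqrt` was defined
in Mathlib of December 2024 (that declaration has since been removed). -/
noncomputable def posSemidefSqrt {n : Type*} [Fintype n] [DecidableEq n]
    {A : Matrix n n ℝ} (hA : A.PosSemidef) : Matrix n n ℝ :=
  (hA.isHermitian.eigenvectorUnitary : Matrix n n ℝ) *
    Matrix.diagonal ((Real.sqrt ·) ∘ hA.isHermitian.eigenvalues) *
    (star hA.isHermitian.eigenvectorUnitary : Matrix n n ℝ)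

/-- Spectral norm of a real matrix: the largest singular value. -/
noncomputable def spec {m n : Type*} [Fintype m] [Fintype n] [DecidableEq n]
    (A : Matrix m n ℝ) : ℝ := ⨆ j, sVals A j

/-- Frobenius norm of a real matrix. -/
noncomputable def frob {m n : Type*} [Fintype m] [Fintype n] (A : Matrix m n ℝ) : ℝ :=
  Real.sqrt (∑ i, ∑ j, (A i j) ^ 2)

open scoped MatrixOrder ComplexOrder
open Matrix

lemma posSemidefSqrt_eq_sqrt {n : Type*} [Fintype n] [DecidableEq n] {A : Matrix n n ℝ}
    (hA : A.PosSemidef) : posSemidefSqrt hA = CFC.sqrt A := by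
  rw [CFC.sqrt_eq_cfc, cfc_nnreal_eq_real _ A hA.nonneg, hA.isHermitian.cfc_eq,
    IsHermitian.cfc, Unitary.conjStarAlgAut_apply]
  unfold posSemidefSqrt
  congr 3
  ext i
  simp [max_eq_left (hA.eigenvalues_nonneg i)]

namespace Matrix

variable {𝕜 : Type*} [RCLike 𝕜] {n m k : Type*}

lemma conjTranspose_mul_self_fromRows {m₁ m₂ : Type*} [Fintype m₁] [Fintype m₂]
    (A₁ : Matrix m₁ n 𝕜) (A₂ : Matrix m₂ n 𝕜) :
    (fromRows A₁ A₂)ᴴ * fromRows A₁ A₂ = A₁ᴴ * A₁ + A₂ᴴ * A₂ := by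
  rw [conjTranspose_fromRows_eq_fromCols_conjTranspose, fromCols_mul_fromRows]

variable [Fintype n] [DecidableEq n] [Fintype m]

lemma conjTranspose_mul_self_sqrt_inv_mul {A : Matrix n n 𝕜} (hA : A.PosSemidef)
    (Z : Matrix n k 𝕜) :
    ((CFC.sqrt A)⁻¹ * Z)ᴴ * ((CFC.sqrt A)⁻¹ * Z) = Zᴴ * A⁻¹ * Z := by
  have hR : (CFC.sqrt A)ᴴ = CFC.sqrt A := (CFC.sqrt_nonneg A).posSemidef.isHermitian
  rw [conjTranspose_mul, conjTranspose_nonsing_inv, hR, Matrix.mul_assoc, ← Matrix.mul_assoc _ _ Z,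
    ← Matrix.mul_inv_rev, CFC.sqrt_mul_sqrt_self A hA.nonneg, Matrix.mul_assoc]

lemma conjTranspose_mul_fromRows_one_zero (X : Matrix (n ⊕ m) n 𝕜) :
    Xᴴ * fromRows (1 : Matrix n n 𝕜) (0 : Matrix m n 𝕜) = X.toRows₁ᴴ := by
  conv_lhs => rw [← fromRows_toRows X]
  rw [conjTranspose_fromRows_eq_fromCols_conjTranspose, fromCols_mul_fromRows,
    Matrix.mul_one, Matrix.mul_zero, add_zero]

lemma mul_inv_conjTranspose_mul_mul_mul_conjTranspose {P : Matrix n n 𝕜} (hP : IsUnit P.det)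
    (B : Matrix n n 𝕜) : P * (Pᴴ * B * P)⁻¹ * Pᴴ = B⁻¹ := by
  have hP' : IsUnit Pᴴ.det := by rwa [det_conjTranspose, isUnit_star]
  rw [Matrix.mul_inv_rev, Matrix.mul_inv_rev, ← Matrix.mul_assoc, Matrix.mul_nonsing_inv _ hP,
    Matrix.one_mul, Matrix.mul_assoc, Matrix.nonsing_inv_mul _ hP', Matrix.mul_one]

/-- The paper's `𝒯(X)`. -/
noncomputable def tangentMatrix (X : Matrix (n ⊕ m) n 𝕜) : Matrix m n 𝕜 :=
  X.toRows₂ * X.toRows₁⁻¹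

lemma conjTranspose_mul_self_eq_tangentMatrix {X : Matrix (n ⊕ m) n 𝕜}
    (hX : IsUnit X.toRows₁.det) :
    Xᴴ * X = X.toRows₁ᴴ * (1 + (tangentMatrix X)ᴴ * tangentMatrix X) * X.toRows₁ := by
  have hT : tangentMatrix X * X.toRows₁ = X.toRows₂ := by
    rw [tangentMatrix, Matrix.mul_assoc, nonsing_inv_mul _ hX, Matrix.mul_one]
  conv_lhs => rw [← fromRows_toRows X, conjTranspose_mul_self_fromRows, ← hT]
  simp only [conjTranspose_mul, Matrix.mul_add, Matrix.add_mul, Matrix.mul_one, Matrix.mul_assoc]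

lemma conjTranspose_mul_self_sqrt_inv_mul_conjTranspose_toRows₁ {X : Matrix (n ⊕ m) n 𝕜}
    (hX : IsUnit X.toRows₁.det) :
    ((CFC.sqrt (Xᴴ * X))⁻¹ * X.toRows₁ᴴ)ᴴ * ((CFC.sqrt (Xᴴ * X))⁻¹ * X.toRows₁ᴴ) =
      (1 + (tangentMatrix X)ᴴ * tangentMatrix X)⁻¹ := by
  rw [conjTranspose_mul_self_sqrt_inv_mul (posSemidef_conjTranspose_mul_self X),
    conjTranspose_conjTranspose, conjTranspose_mul_self_eq_tangentMatrix hX,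
    mul_inv_conjTranspose_mul_mul_mul_conjTranspose hX]

lemma PosSemidef.one_add_inv_eq_cfc {B : Matrix n n 𝕜} (hB : B.PosSemidef) :
    (1 + B)⁻¹ = cfc (fun x : ℝ => (1 + x)⁻¹) B := by
  have hne : ∀ x ∈ spectrum ℝ B, 1 + x ≠ 0 := fun x hx =>
    (add_pos_of_pos_of_nonneg one_pos (spectrum_nonneg_of_nonneg hB.nonneg hx)).ne'
  rw [cfc_inv (fun x : ℝ => 1 + x) B hne, cfc_const_add _ _ B, cfc_id' ℝ B,
    Algebra.algebraMap_eq_smul_one, one_smul, nonsing_inv_eq_ringInverse]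

open Polynomial in
lemma PosSemidef.charpoly_one_add_inv {B : Matrix n n 𝕜} (hB : B.PosSemidef) :
    ((1 + B)⁻¹).charpoly =
      ∏ i, (X - C (((1 + hB.isHermitian.eigenvalues i)⁻¹ : ℝ) : 𝕜)) := by
  rw [hB.one_add_inv_eq_cfc, hB.isHermitian.charpoly_cfc_eq]

open Polynomial in
lemma IsHermitian.map_eigenvalues_eq_of_charpoly_eq {A : Matrix n n 𝕜} (hA : A.IsHermitian)
    {ι : Type*} [Fintype ι] {v : ι → ℝ} (h : A.charpoly = ∏ i, (X - C (v i : 𝕜))) :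
    Finset.univ.val.map hA.eigenvalues = Finset.univ.val.map v := by
  have hprod : ∏ i, (X - C (v i : 𝕜)) =
      ((Finset.univ.val.map (RCLike.ofReal ∘ v)).map fun a => X - C a).prod := by
    rw [Multiset.map_map]; rfl
  have hroots := hA.roots_charpoly_eq_eigenvalues
  rw [h, hprod, roots_multiset_prod_X_sub_C, ← Multiset.map_map, ← Multiset.map_map] at hroots
  exact (Multiset.map_injective RCLike.ofReal_injective hroots).symm

end Matrix

lemma Real.tan_arccos_sqrt_inv_one_add {x : ℝ} (hx : 0 ≤ x) :
    Real.tan (Real.arccos √((1 + x)⁻¹)) = √x := by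
  have hx1 : 0 < 1 + x := by linarith
  rw [Real.tan_arccos, Real.sq_sqrt (inv_nonneg.mpr hx1.le),
    show 1 - (1 + x)⁻¹ = x * (1 + x)⁻¹ by field_simp; ring,
    Real.sqrt_mul hx, mul_div_assoc, div_self (Real.sqrt_pos.mpr (inv_pos.mpr hx1)).ne', mul_one]

section MapUniv

variable {ι κ α β : Type*} [Fintype ι] [Fintype κ] {f : ι → α} {g : κ → α}

lemma Finset.sum_comp_eq_of_map_univ_eq [AddCommMonoid β]
    (h : Finset.univ.val.map f = Finset.univ.val.map g) (φ : α → β) :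
    ∑ i, φ (f i) = ∑ k, φ (g k) :=
  calc ∑ i, φ (f i) = ((Finset.univ.val.map f).map φ).sum := by rw [Multiset.map_map]; rfl
    _ = ∑ k, φ (g k) := by rw [h, Multiset.map_map]; rfl

lemma iSup_comp_eq_of_map_univ_eq [SupSet β]
    (h : Finset.univ.val.map f = Finset.univ.val.map g) (φ : α → β) :
    ⨆ i, φ (f i) = ⨆ k, φ (g k) := by
  have hrange : Set.range f = Set.range g := by
    ext x
    simpa using congr_arg (x ∈ ·) h
  calc ⨆ i, φ (f i) = sSup (φ '' Set.range f) := by rw [← Set.range_comp]; rfl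
    _ = ⨆ k, φ (g k) := by rw [hrange, ← Set.range_comp]; rfl

end MapUniv

/-- For `X` with nonsingular top block and `Y = [I_p; 0]`, the spectral and Frobenius
norms of `tan Θ(X, Y)` equal those of `𝒯(X) = X_{(p+1:d,:)} X_{(1:p,:)}⁻¹`.  Here the
canonical angles are `θ_j = arccos σ_j` with `σ_j` the singular values of
`(XᴴX)^{-1/2} Xᴴ Y`; the spectral norm of the diagonal matrix `tan Θ` is the sup of the
tangents and its squared Frobenius norm is the sum of the squared tangents. -/
theorem stmt0 {p m : ℕ} (X : Matrix (Fin p ⊕ Fin m) (Fin p) ℝ)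
    (hX : IsUnit (X.submatrix Sum.inl id).det) :
    let Y : Matrix (Fin p ⊕ Fin m) (Fin p) ℝ :=
      Matrix.fromRows (1 : Matrix (Fin p) (Fin p) ℝ) (0 : Matrix (Fin m) (Fin p) ℝ)
    let M := (posSemidefSqrt (Matrix.posSemidef_conjTranspose_mul_self X))⁻¹ * (Xᴴ * Y)
    let θ : Fin p → ℝ := fun j => Real.arccos (sVals M j)
    let T := X.submatrix Sum.inr id * (X.submatrix Sum.inl id)⁻¹
    (⨆ j, Real.tan (θ j)) = spec T ∧
    ∑ j, Real.tan (θ j) ^ 2 = ∑ j, (sVals T j) ^ 2 := by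
  intro Y M θ T
  have hMM : Mᴴ * M = (1 + Tᴴ * T)⁻¹ := by
    simp only [M, Y, posSemidefSqrt_eq_sqrt, conjTranspose_mul_fromRows_one_zero]
    exact conjTranspose_mul_self_sqrt_inv_mul_conjTranspose_toRows₁ hX
  have hB := posSemidef_conjTranspose_mul_self T
  have hcos : Finset.univ.val.map (posSemidef_conjTranspose_mul_self M).isHermitian.eigenvalues =
      Finset.univ.val.map fun k => (1 + hB.isHermitian.eigenvalues k)⁻¹ :=
    IsHermitian.map_eigenvalues_eq_of_charpoly_eq _ (by rw [hMM]; exact hB.charpoly_one_add_inv)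
  have htan : ∀ k, sVals T k = Real.tan (Real.arccos √((1 + hB.isHermitian.eigenvalues k)⁻¹)) :=
    fun k => (Real.tan_arccos_sqrt_inv_one_add (hB.eigenvalues_nonneg k)).symm
  constructor
  · rw [spec, iSup_congr htan]
    exact iSup_comp_eq_of_map_univ_eq hcos fun x => Real.tan (Real.arccos √x)
  · simp only [htan]
    exact Finset.sum_comp_eq_of_map_univ_eq hcos fun x => Real.tan (Real.arccos √x) ^ 2
end

section
/- Let λ_1 ≥ ⋯ ≥ λ_d > 0 with λ_p > λ_{p+1}, and define φ(p,d;Λ) = Σ_{j=1}^{p} Σ_{i=p+1}^{d} λ_j λ_i / (λ_j − λ_i). Then p(d−p) λ_1 λ_d/(λ_1 − λ_d) ≤ φ(p,d;Λ) ≤ p(d−p) λ_p λ_{p+1}/(λ_p − λ_{p+1}). -/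
lemma key_mono {a b a' b' : ℝ} (hb : 0 < b) (hbb : b ≤ b') (hba : b' < a') (haa : a' ≤ a) :
    a * b / (a - b) ≤ a' * b' / (a' - b') := by
  have h1 : 0 < a - b := by linarith
  have h2 : 0 < a' - b' := by linarith
  rw [div_le_div_iff₀ h1 h2]
  nlinarith [mul_nonneg (mul_nonneg (by linarith : (0:ℝ) ≤ a) (by linarith : (0:ℝ) ≤ a')) (by linarith : (0:ℝ) ≤ b' - b),
    mul_nonneg (mul_nonneg hb.le (by linarith : (0:ℝ) ≤ b')) (by linarith : (0:ℝ) ≤ a - a')]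

/-- Bounds on `φ(p,d;Λ) = Σ_{j=1}^p Σ_{i=p+1}^d λ_j λ_i/(λ_j - λ_i)` for
`λ_1 ≥ ⋯ ≥ λ_d > 0` with `λ_p > λ_{p+1}` (0-based indexing: `lam 0, …, lam (d-1)`). -/
theorem stmt6 {d p : ℕ} (hp : 0 < p) (hpd : p < d) (lam : ℕ → ℝ)
    (hdec : ∀ i j, i ≤ j → j < d → lam j ≤ lam i)
    (hpos : ∀ i, i < d → 0 < lam i)
    (hgap : lam p < lam (p - 1)) :
    ((p * (d - p) : ℕ) : ℝ) * (lam 0 * lam (d - 1) / (lam 0 - lam (d - 1)))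
      ≤ ∑ j ∈ Finset.range p, ∑ i ∈ Finset.Ico p d, lam j * lam i / (lam j - lam i) ∧
    ∑ j ∈ Finset.range p, ∑ i ∈ Finset.Ico p d, lam j * lam i / (lam j - lam i)
      ≤ ((p * (d - p) : ℕ) : ℝ) * (lam (p - 1) * lam p / (lam (p - 1) - lam p)) := by
  have hsum : ∀ c : ℝ, ∑ _j ∈ Finset.range p, ∑ _i ∈ Finset.Ico p d, c
      = ((p * (d - p) : ℕ) : ℝ) * c := by
    intro c
    simp only [Finset.sum_const, Finset.card_range, Nat.card_Ico, nsmul_eq_mul]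
    push_cast
    ring
  have hp1d : p - 1 < d := by omega
  have hd1 : d - 1 < d := by omega
  have hbound : ∀ j ∈ Finset.range p, ∀ i ∈ Finset.Ico p d,
      lam 0 * lam (d - 1) / (lam 0 - lam (d - 1)) ≤ lam j * lam i / (lam j - lam i) ∧
      lam j * lam i / (lam j - lam i) ≤ lam (p - 1) * lam p / (lam (p - 1) - lam p) := by
    intro j hj i hi
    rw [Finset.mem_range] at hj
    rw [Finset.mem_Ico] at hi
    have h1 : lam (p - 1) ≤ lam j := hdec j (p - 1) (by omega) hp1d
    have h2 : lam j ≤ lam 0 := hdec 0 j (by omega) (by omega)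
    have h3 : lam i ≤ lam p := hdec p i hi.1 hi.2
    have h4 : lam (d - 1) ≤ lam i := hdec i (d - 1) (by omega) hd1
    have hip : 0 < lam (d - 1) := hpos _ hd1
    constructor
    · exact key_mono hip h4 (by linarith) h2
    · exact key_mono (by linarith) h3 hgap h1
  constructor
  · rw [← hsum]
    refine Finset.sum_le_sum fun j hj => Finset.sum_le_sum fun i hi => ?_
    exact (hbound j hj i hi).1
  · rw [← hsum]
    refine Finset.sum_le_sum fun j hj => Finset.sum_le_sum fun i hi => ?_
    exact (hbound j hj i hi).2
end

section
/- Let λ_1 ≥ ⋯ ≥ λ_d > 0 with λ_p > λ_{p+1}, and 0 < β with β(λ_1 − λ_d) < 1. Define the linear operator ℒ on ℝ^{(d−p)×p} by ℒT = T + β ul(Λ) T − β T ol(Λ), where ol(Λ) = diag(λ_1,…,λ_p) and ul(Λ) = diag(λ_{p+1},…,λ_d). Then ℒT = L ∘ T (Hadamard product) where L_{ij} = 1 + β λ_{p+i} − β λ_j, and the operator norm of ℒ induced by the spectral norm (and also by the Frobenius norm) equals its spectral radius 1 − β(λ_p − λ_{p+1}). -/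
open scoped Matrix

/-!
The operator is Hadamard multiplication by `L i j = a i + b j` with `a i = 1 + β λ_{p+i}` and
`b j = -β λ_j`. The condition `β (λ_0 - λ_{p+m-1}) < 1` makes every entry positive, and the
ordering of `λ` makes the corner entry `1 - β (λ_{p-1} - λ_p)` the largest one; the matrix unit
at that corner is an eigenvector for it. So both induced norms are at least that entry, and it
remains to bound them by `max |L i j|`. For the Frobenius norm this is entrywise. For the spectral
norm, `L ⊙ T = diagonal (a - z) * T + T * diagonal (b + z)` for every shift `z`, and the midpoint
of the range of `a` is the shift that makes the triangle inequality sharp.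
-/

open scoped Matrix.Norms.L2Operator

namespace Matrix

variable {m n : Type*} [Fintype m] [Fintype n]

theorem IsHermitian.l2_opNorm_eq_norm_eigenvalues [DecidableEq n] {A : Matrix n n ℝ}
    (hA : A.IsHermitian) : ‖A‖ = ‖hA.eigenvalues‖ := by
  conv_lhs => rw [hA.spectral_theorem]
  rw [Unitary.conjStarAlgAut_apply, ← Unitary.coe_star, CStarRing.norm_mul_coe_unitary,
    CStarRing.norm_coe_unitary_mul, l2_opNorm_diagonal]
  rfl

theorem l2_opNorm_single_one [DecidableEq m] [DecidableEq n] (i : m) (j : n) :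
    ‖(single i j 1 : Matrix m n ℝ)‖ = 1 := by
  have h := l2_opNorm_conjTranspose_mul_self (single i j (1 : ℝ))
  rw [conjTranspose_single, single_mul_single_same, ← diagonal_single, l2_opNorm_diagonal,
    star_one, mul_one, Pi.norm_single, norm_one, ← sq] at h
  exact (pow_eq_one_iff_of_nonneg (norm_nonneg _) two_ne_zero).1 h.symm

omit [Fintype m] [Fintype n] in
theorem hadamard_single_one [DecidableEq m] [DecidableEq n] (L : Matrix m n ℝ) (i : m) (j : n) :
    L ⊙ single i j 1 = L i j • single i j 1 := by
  ext i' j'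
  by_cases h : i = i' ∧ j = j'
  · obtain ⟨rfl, rfl⟩ := h
    simp
  · simp [h]

theorem l2_opNorm_hadamard_le_of_eq_add [Nonempty m] [Nonempty n] [DecidableEq m]
    [DecidableEq n] {L : Matrix m n ℝ} {a : m → ℝ} {b : n → ℝ} (hL : ∀ i j, L i j = a i + b j)
    {c : ℝ} (hc : ∀ i j, |L i j| ≤ c) (T : Matrix m n ℝ) : ‖L ⊙ T‖ ≤ c * ‖T‖ := by
  obtain ⟨i₀, -, hi₀⟩ := Finset.exists_min_image Finset.univ a Finset.univ_nonempty
  obtain ⟨i₁, -, hi₁⟩ := Finset.exists_max_image Finset.univ a Finset.univ_nonempty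
  set z := (a i₀ + a i₁) / 2 with hz
  set r := (a i₁ - a i₀) / 2 with hr
  have hsplit : L ⊙ T = diagonal (fun i => a i - z) * T + T * diagonal (fun j => b j + z) := by
    ext i j
    simp only [hadamard_apply, hL, add_apply, diagonal_mul, mul_diagonal]
    ring
  have ha : ‖diagonal (fun i => a i - z)‖ ≤ r := by
    rw [l2_opNorm_diagonal, pi_norm_le_iff_of_nonempty]
    intro i
    rw [Real.norm_eq_abs, abs_le]
    constructor <;> linarith [hi₀ i (Finset.mem_univ _), hi₁ i (Finset.mem_univ _)]
  have hb : ‖diagonal (fun j => b j + z)‖ ≤ c - r := by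
    rw [l2_opNorm_diagonal, pi_norm_le_iff_of_nonempty]
    intro j
    have h₀ := abs_le.1 (hc i₀ j)
    have h₁ := abs_le.1 (hc i₁ j)
    rw [hL] at h₀ h₁
    rw [Real.norm_eq_abs, abs_le]
    constructor <;> linarith
  calc ‖L ⊙ T‖ ≤ ‖diagonal (fun i => a i - z)‖ * ‖T‖ + ‖T‖ * ‖diagonal (fun j => b j + z)‖ := by
        rw [hsplit]
        exact (norm_add_le _ _).trans (add_le_add (l2_opNorm_mul _ _) (l2_opNorm_mul _ _))
    _ ≤ r * ‖T‖ + ‖T‖ * (c - r) := by gcongr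
    _ = c * ‖T‖ := by ring

end Matrix

open Matrix

section NormsOfMatrices

variable {m n : Type*} [Fintype m] [Fintype n]

theorem spec_eq_l2_opNorm [DecidableEq n] (A : Matrix m n ℝ) : spec A = ‖A‖ := by
  set hH := posSemidef_conjTranspose_mul_self A
  have hnorm : ‖A‖ ^ 2 = ‖hH.isHermitian.eigenvalues‖ := by
    rw [sq, ← l2_opNorm_conjTranspose_mul_self, hH.isHermitian.l2_opNorm_eq_norm_eigenvalues]
  apply le_antisymm
  · refine Real.iSup_le (fun j => ?_) (norm_nonneg A)
    rw [← Real.sqrt_sq (norm_nonneg A), hnorm]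
    exact Real.sqrt_le_sqrt ((Real.le_norm_self _).trans (norm_le_pi_norm _ j))
  · have hspec : 0 ≤ spec A := Real.iSup_nonneg fun j => Real.sqrt_nonneg _
    refine (pow_le_pow_iff_left₀ (norm_nonneg A) hspec two_ne_zero).1 ?_
    rw [hnorm]
    refine (pi_norm_le_iff_of_nonneg (sq_nonneg _)).2 fun j => ?_
    rw [Real.norm_of_nonneg (hH.eigenvalues_nonneg j), ← Real.sq_sqrt (hH.eigenvalues_nonneg j)]
    exact pow_le_pow_left₀ (Real.sqrt_nonneg _)
      (le_ciSup (f := sVals A) (Set.finite_range _).bddAbove j) 2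

theorem frob_smul (r : ℝ) (T : Matrix m n ℝ) : frob (r • T) = |r| * frob T := by
  simp only [frob, Matrix.smul_apply, smul_eq_mul, mul_pow, ← Finset.mul_sum]
  rw [Real.sqrt_mul (sq_nonneg r), Real.sqrt_sq_eq_abs]

theorem frob_single_one [DecidableEq m] [DecidableEq n] (i : m) (j : n) :
    frob (single i j (1 : ℝ)) = 1 := by
  simp [frob, single_apply, ite_and, ite_pow]

theorem frob_hadamard_le {L : Matrix m n ℝ} {c : ℝ} (hc₀ : 0 ≤ c) (hc : ∀ i j, |L i j| ≤ c)
    (T : Matrix m n ℝ) : frob (L ⊙ T) ≤ c * frob T := by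
  rw [frob, frob, ← Real.sqrt_sq hc₀, ← Real.sqrt_mul (sq_nonneg c), Finset.mul_sum]
  simp_rw [Finset.mul_sum]
  gcongr with i _ j _
  rw [hadamard_apply, mul_pow, ← sq_abs (L i j)]
  gcongr
  exact hc i j

end NormsOfMatrices

section HadamardMultiplierNorm

variable {m n : Type*} [Fintype m] [Fintype n] [DecidableEq m] [DecidableEq n]

omit [Fintype m] [Fintype n] in
theorem iSup_hadamard_eq_of_le {N : Matrix m n ℝ → ℝ} (L : Matrix m n ℝ) (i₀ : m) (j₀ : n)
    (hsmul : ∀ (r : ℝ) T, N (r • T) = |r| * N T) (hsingle : N (single i₀ j₀ 1) = 1)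
    (hle : ∀ T, N (L ⊙ T) ≤ L i₀ j₀ * N T) :
    ⨆ T : {T : Matrix m n ℝ // N T = 1}, N (L ⊙ T.1) = L i₀ j₀ := by
  have hattain : N (L ⊙ single i₀ j₀ 1) = L i₀ j₀ := by
    have h := hle (single i₀ j₀ 1)
    simp only [hadamard_single_one, hsmul, hsingle, mul_one] at h ⊢
    exact abs_eq_self.2 ((abs_nonneg _).trans h)
  refine (IsMaxOn.iSup_eq (s := {T | N T = 1}) (f := fun T => N (L ⊙ T)) hsingle
    (isMaxOn_iff.2 fun T hT => ?_)).trans hattain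
  simpa [hattain, hT.out] using hle T

theorem iSup_spec_hadamard_eq {L : Matrix m n ℝ} {a : m → ℝ} {b : n → ℝ}
    (hL : ∀ i j, L i j = a i + b j) (i₀ : m) (j₀ : n) (hmax : ∀ i j, |L i j| ≤ L i₀ j₀) :
    ⨆ T : {T : Matrix m n ℝ // spec T = 1}, spec (L ⊙ T.1) = L i₀ j₀ := by
  have : Nonempty m := ⟨i₀⟩
  have : Nonempty n := ⟨j₀⟩
  refine iSup_hadamard_eq_of_le L i₀ j₀ (fun r T => ?_) ?_ fun T => ?_
  · rw [spec_eq_l2_opNorm, spec_eq_l2_opNorm, norm_smul, Real.norm_eq_abs]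
  · rw [spec_eq_l2_opNorm, l2_opNorm_single_one]
  · rw [spec_eq_l2_opNorm, spec_eq_l2_opNorm]
    exact l2_opNorm_hadamard_le_of_eq_add hL hmax T

theorem iSup_frob_hadamard_eq {L : Matrix m n ℝ} (i₀ : m) (j₀ : n)
    (hmax : ∀ i j, |L i j| ≤ L i₀ j₀) :
    ⨆ T : {T : Matrix m n ℝ // frob T = 1}, frob (L ⊙ T.1) = L i₀ j₀ :=
  iSup_hadamard_eq_of_le L i₀ j₀ frob_smul (frob_single_one i₀ j₀)
    (frob_hadamard_le ((abs_nonneg _).trans (hmax i₀ j₀)) hmax)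

end HadamardMultiplierNorm

theorem abs_one_add_mul_sub_mul_le {p m : ℕ} {lam : ℕ → ℝ} {β : ℝ} (hβ : 0 ≤ β)
    (hdec : ∀ i j, i ≤ j → j < p + m → lam j ≤ lam i)
    (hβ1 : β * (lam 0 - lam (p + m - 1)) < 1) {i j : ℕ} (hpi : p ≤ i) (him : i < p + m)
    (hjp : j < p) :
    |1 + β * lam i - β * lam j| ≤ 1 + β * lam p - β * lam (p - 1) := by
  have hi := mul_le_mul_of_nonneg_left (hdec p i hpi him) hβ
  have hi' := mul_le_mul_of_nonneg_left (hdec i (p + m - 1) (by omega) (by omega)) hβ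
  have hj := mul_le_mul_of_nonneg_left (hdec j (p - 1) (by omega) (by omega)) hβ
  have hj' := mul_le_mul_of_nonneg_left (hdec 0 j (by omega) (by omega)) hβ
  rw [abs_of_nonneg (by linarith)]
  linarith

theorem stmt7_general {p m : ℕ} (hp : 0 < p) (hm : 0 < m) (lam : ℕ → ℝ) (β : ℝ) (hβ : 0 < β)
    (hdec : ∀ i j, i ≤ j → j < p + m → lam j ≤ lam i)
    (hβ1 : β * (lam 0 - lam (p + m - 1)) < 1) :
    let olL : Matrix (Fin p) (Fin p) ℝ := Matrix.diagonal fun j => lam j.val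
    let ulL : Matrix (Fin m) (Fin m) ℝ := Matrix.diagonal fun i => lam (p + i.val)
    let Lop : Matrix (Fin m) (Fin p) ℝ → Matrix (Fin m) (Fin p) ℝ :=
      fun T => T + β • (ulL * T) - β • (T * olL)
    (∀ T (i : Fin m) (j : Fin p),
        Lop T i j = (1 + β * lam (p + i.val) - β * lam j.val) * T i j) ∧
    (⨆ T : {T : Matrix (Fin m) (Fin p) ℝ // spec T = 1}, spec (Lop T.1))
        = 1 - β * (lam (p - 1) - lam p) ∧
    (⨆ T : {T : Matrix (Fin m) (Fin p) ℝ // frob T = 1}, frob (Lop T.1))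
        = 1 - β * (lam (p - 1) - lam p) := by
  intro olL ulL Lop
  let L : Matrix (Fin m) (Fin p) ℝ := of fun i j => 1 + β * lam (p + i.val) - β * lam j.val
  have hLop : Lop = (L ⊙ ·) := by
    ext T i j
    simp only [Lop, olL, ulL, L, Matrix.sub_apply, Matrix.add_apply, Matrix.smul_apply,
      diagonal_mul, mul_diagonal, hadamard_apply, of_apply, smul_eq_mul]
    ring
  let i₀ : Fin m := ⟨0, hm⟩
  let j₀ : Fin p := ⟨p - 1, by omega⟩
  have hcorner : L i₀ j₀ = 1 - β * (lam (p - 1) - lam p) := by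
    simp only [L, i₀, j₀, of_apply, add_zero]
    ring
  have hmax : ∀ i j, |L i j| ≤ L i₀ j₀ := fun i j => by
    simpa only [L, i₀, j₀, of_apply, add_zero] using
      abs_one_add_mul_sub_mul_le hβ.le hdec hβ1 (Nat.le_add_right p i) (by omega) j.isLt
  have hL : ∀ i j, L i j = (1 + β * lam (p + i.val)) + -(β * lam j.val) :=
    fun i j => sub_eq_add_neg _ _
  rw [hLop, ← hcorner]
  exact ⟨fun T i j => rfl, iSup_spec_hadamard_eq hL i₀ j₀ hmax, iSup_frob_hadamard_eq i₀ j₀ hmax⟩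

/-- The operator `ℒT = T + β ulΛ T - β T olΛ` is Hadamard multiplication by the matrix
`L_{ij} = 1 + β λ_{p+i} - β λ_j`, and its induced operator norm, both for the spectral
and for the Frobenius norm, equals its spectral radius `1 - β(λ_p - λ_{p+1})`
(0-based indexing: `lam 0, …, lam (p+m-1)`). -/
theorem stmt7 {p m : ℕ} (hp : 0 < p) (hm : 0 < m) (lam : ℕ → ℝ) (β : ℝ) (hβ : 0 < β)
    (hdec : ∀ i j, i ≤ j → j < p + m → lam j ≤ lam i)
    (hpos : ∀ i, i < p + m → 0 < lam i)
    (hgap : lam p < lam (p - 1))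
    (hβ1 : β * (lam 0 - lam (p + m - 1)) < 1) :
    let olL : Matrix (Fin p) (Fin p) ℝ := Matrix.diagonal fun j => lam j.val
    let ulL : Matrix (Fin m) (Fin m) ℝ := Matrix.diagonal fun i => lam (p + i.val)
    let Lop : Matrix (Fin m) (Fin p) ℝ → Matrix (Fin m) (Fin p) ℝ :=
      fun T => T + β • (ulL * T) - β • (T * olL)
    (∀ T (i : Fin m) (j : Fin p),
        Lop T i j = (1 + β * lam (p + i.val) - β * lam j.val) * T i j) ∧
    (⨆ T : {T : Matrix (Fin m) (Fin p) ℝ // spec T = 1}, spec (Lop T.1))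
        = 1 - β * (lam (p - 1) - lam p) ∧
    (⨆ T : {T : Matrix (Fin m) (Fin p) ℝ // frob T = 1}, frob (Lop T.1))
        = 1 - β * (lam (p - 1) - lam p) :=
  stmt7_general hp hm lam β hβ hdec hβ1
end

section
/- Let V, V⁺ ∈ ℝ^{d×p} with top blocks ol(V), ol(V⁺) = ol(V) + Δol(V) both nonsingular, and bottom blocks ul(V), ul(V⁺) = ul(V) + Δul(V). Set T = ul(V) ol(V)^{-1} and T⁺ = ul(V⁺) ol(V⁺)^{-1}. Then T⁺ − T = [Δul(V) − T Δol(V)] [I − (ol(V⁺))^{-1} Δol(V)] ol(V)^{-1}. -/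
open scoped Matrix

lemma stmt11_aux {p m : ℕ} (A B Δol : Matrix (Fin p) (Fin p) ℝ)
    (ulV Δul : Matrix (Fin m) (Fin p) ℝ)
    (hBA : B = A + Δol) (h1 : IsUnit A.det) (h2 : IsUnit B.det) :
    (ulV + Δul) * B⁻¹ - ulV * A⁻¹
      = (Δul - ulV * A⁻¹ * Δol) * (1 - B⁻¹ * Δol) * A⁻¹ := by
  have hA1 : A⁻¹ * A = 1 := Matrix.nonsing_inv_mul _ h1
  have hA2 : A * A⁻¹ = 1 := Matrix.mul_nonsing_inv _ h1
  have hB1 : B⁻¹ * B = 1 := Matrix.nonsing_inv_mul _ h2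
  have hB2 : B * B⁻¹ = 1 := Matrix.mul_nonsing_inv _ h2
  have key : (1 - B⁻¹ * Δol) * A⁻¹ = B⁻¹ := by
    calc (1 - B⁻¹ * Δol) * A⁻¹ = B⁻¹ * B * A⁻¹ - B⁻¹ * Δol * A⁻¹ := by
          rw [hB1]; noncomm_ring
      _ = B⁻¹ * (A + Δol) * A⁻¹ - B⁻¹ * Δol * A⁻¹ := by rw [← hBA]
      _ = B⁻¹ * (A * A⁻¹) := by noncomm_ring
      _ = B⁻¹ := by rw [hA2, Matrix.mul_one]
  have diff : A⁻¹ - B⁻¹ = A⁻¹ * Δol * B⁻¹ := by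
    calc A⁻¹ - B⁻¹ = A⁻¹ * (B * B⁻¹) - (A⁻¹ * A) * B⁻¹ := by
          rw [hB2, hA1, Matrix.mul_one, Matrix.one_mul]
      _ = A⁻¹ * ((A + Δol) * B⁻¹) - (A⁻¹ * A) * B⁻¹ := by rw [← hBA]
      _ = A⁻¹ * Δol * B⁻¹ := by noncomm_ring
  rw [Matrix.mul_assoc, key]
  have h3 : ulV * A⁻¹ - ulV * B⁻¹ = ulV * (A⁻¹ * Δol * B⁻¹) := by
    rw [← Matrix.mul_sub, diff]
  calc (ulV + Δul) * B⁻¹ - ulV * A⁻¹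
      = Δul * B⁻¹ - (ulV * A⁻¹ - ulV * B⁻¹) := by rw [Matrix.add_mul]; abel
    _ = Δul * B⁻¹ - ulV * (A⁻¹ * Δol * B⁻¹) := by rw [h3]
    _ = (Δul - ulV * A⁻¹ * Δol) * B⁻¹ := by
          rw [Matrix.sub_mul]; simp [Matrix.mul_assoc]

/-- Difference formula for `T = ulV olV⁻¹` under a perturbation of the blocks
(Sherman–Morrison–Woodbury):
`T⁺ - T = (Δul - T Δol)(I - (olV + Δol)⁻¹ Δol) olV⁻¹`. -/
theorem stmt11 {p m : ℕ} (olV Δol : Matrix (Fin p) (Fin p) ℝ)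
    (ulV Δul : Matrix (Fin m) (Fin p) ℝ)
    (h1 : IsUnit olV.det) (h2 : IsUnit (olV + Δol).det) :
    (ulV + Δul) * (olV + Δol)⁻¹ - ulV * olV⁻¹
      = (Δul - ulV * olV⁻¹ * Δol) * (1 - (olV + Δol)⁻¹ * Δol) * olV⁻¹ :=
  stmt11_aux olV (olV + Δol) Δol ulV Δul rfl h1 h2
end
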